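/- The function θ̄z(θ1) = ((θ1 + 5) − 2√(4θ1² + 10θ1 + 5)) / (5θ1) is strictly decreasing in θ1 on the interval (0, (2√3 − 3)/3]. -/
import Mathlib


noncomputable def thetaBar (t1 : ℝ) : ℝ :=
  ((t1 + 5) - 2 * Real.sqrt (4*t1^2 + 10*t1 + 5)) / (5*t1)

theorem stmt_5 : StrictAntiOn thetaBar (Set.Ioc (0 : ℝ) ((2*Real.sqrt 3 - 3)/3)) := by
  intro a ha b hb hab
  obtain ⟨ha0, -⟩ := ha
  obtain ⟨hb0, -⟩ := hb
  set sa := Real.sqrt (4*a^2 + 10*a + 5) with hsadef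
  set sb := Real.sqrt (4*b^2 + 10*b + 5) with hsbdef
  have hqa : (0:ℝ) ≤ 4*a^2 + 10*a + 5 := by nlinarith
  have hqb : (0:ℝ) ≤ 4*b^2 + 10*b + 5 := by nlinarith
  have hsa2 : sa^2 = 4*a^2 + 10*a + 5 := Real.sq_sqrt hqa
  have hsb2 : sb^2 = 4*b^2 + 10*b + 5 := Real.sq_sqrt hqb
  have hsa_gt : 2*a + 2 < sa := by
    rw [hsadef]
    exact (Real.lt_sqrt (by linarith)).mpr (by nlinarith)
  have hsb_gt : 2*b + 2 < sb := by
    rw [hsbdef]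
    exact (Real.lt_sqrt (by linarith)).mpr (by nlinarith)
  have hsum : 2*(2*a*b + a + b) < b*sa + a*sb := by
    nlinarith [mul_lt_mul_of_pos_left hsa_gt hb0, mul_lt_mul_of_pos_left hsb_gt ha0]
  have hpos : 0 < b*sa + a*sb := by nlinarith
  have key : 2*(b*sa - a*sb) < 5*(b-a) := by
    have hm : (2*(b*sa - a*sb))*(b*sa + a*sb) < (5*(b-a))*(b*sa + a*sb) := by
      nlinarith [mul_pos (sub_pos.mpr hab) (sub_pos.mpr hsum), hsa2, hsb2]
    exact lt_of_mul_lt_mul_right hm (le_of_lt hpos)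
  unfold thetaBar
  rw [div_lt_div_iff₀ (by linarith) (by linarith)]
  nlinarith [key]
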